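/- The three points q([0]), q([1]), q([2]) of X are pairwise distinct; moreover, every open set containing q([0]) intersects every open set containing q([1]), and every open set containing q([1]) intersects every open set containing q([2]). In particular, X is not Hausdorff. -/
import Mathlib


/-- The additive circle `ℝ/3ℤ`. -/
abbrev CircleThree : Type := AddCircle (3 : ℝ)

/-- The relation `r` on `C = ℝ/3ℤ`: `r x y` iff `x = y`, or there is `t ∈ (0,1)`
with (`x = [t]` and `y = [t+1]`) or (`x = [t+1]` and `y = [t]`). -/
def relAabAb (x y : CircleThree) : Prop :=
  x = y ∨ ∃ t : ℝ, 0 < t ∧ t < 1 ∧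
    ((x = (t : CircleThree) ∧ y = ((t + 1 : ℝ) : CircleThree)) ∨
     (x = ((t + 1 : ℝ) : CircleThree) ∧ y = (t : CircleThree)))


instance : Fact ((0:ℝ) < 3) := ⟨by norm_num⟩

noncomputable def gSep : ℝ → ℝ := fun s =>
  if s = 0 then 0 else if s = 1 then 1 else if s = 2 then 2 else if s < 2 then 5 else 7

noncomputable def fSep : CircleThree → ℝ := AddCircle.liftIco 3 0 gSep

lemma fSep_coe {x : ℝ} (hx : x ∈ Set.Ico (0:ℝ) 3) : fSep (x : CircleThree) = gSep x := by
  have : x ∈ Set.Ico (0:ℝ) (0 + 3) := by simpa using hx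
  exact AddCircle.liftIco_coe_apply this

lemma fSep_rel : ∀ a b, relAabAb a b → fSep a = fSep b := by
  rintro a b (rfl | ⟨t, ht0, ht1, ⟨rfl, rfl⟩ | ⟨rfl, rfl⟩⟩)
  · rfl
  · rw [fSep_coe ⟨ht0.le, by linarith⟩, fSep_coe ⟨by linarith, by linarith⟩]
    unfold gSep
    rw [if_neg (by linarith), if_neg (by linarith), if_neg (by linarith),
      if_pos (by linarith), if_neg (by linarith), if_neg (by linarith),
      if_neg (by linarith), if_pos (by linarith)]
  · rw [fSep_coe ⟨ht0.le, by linarith⟩, fSep_coe ⟨by linarith, by linarith⟩]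
    unfold gSep
    rw [if_neg (by linarith), if_neg (by linarith), if_neg (by linarith),
      if_pos (by linarith), if_neg (by linarith), if_neg (by linarith),
      if_neg (by linarith), if_pos (by linarith)]

lemma fSep_quot_ne {x y : ℝ} (hx : x ∈ Set.Ico (0:ℝ) 3) (hy : y ∈ Set.Ico (0:ℝ) 3)
    (h : gSep x ≠ gSep y) :
    Quot.mk relAabAb (x : CircleThree) ≠ Quot.mk relAabAb (y : CircleThree) := by
  intro he
  apply h
  have := congrArg (Quot.lift fSep fSep_rel) he
  simpa [fSep_coe hx, fSep_coe hy] using this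

lemma cont_mk : Continuous (fun r : ℝ => Quot.mk relAabAb (r : CircleThree)) :=
  continuous_quot_mk.comp continuous_quotient_mk'

lemma meet (a b : ℝ)
    (key : ∀ ε : ℝ, 0 < ε → ∃ u v : ℝ, |u - a| < ε ∧ |v - b| < ε ∧
      Quot.mk relAabAb (u : CircleThree) = Quot.mk relAabAb (v : CircleThree)) :
    ∀ O₁ O₂ : Set (Quot relAabAb), IsOpen O₁ → IsOpen O₂ →
      Quot.mk relAabAb (a : CircleThree) ∈ O₁ →
      Quot.mk relAabAb (b : CircleThree) ∈ O₂ → (O₁ ∩ O₂).Nonempty := by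
  intro O₁ O₂ h₁ h₂ ha hb
  have w₁ : IsOpen ((fun r : ℝ => Quot.mk relAabAb (r : CircleThree)) ⁻¹' O₁) :=
    h₁.preimage cont_mk
  have w₂ : IsOpen ((fun r : ℝ => Quot.mk relAabAb (r : CircleThree)) ⁻¹' O₂) :=
    h₂.preimage cont_mk
  obtain ⟨ε₁, hε₁, hb₁⟩ := Metric.isOpen_iff.1 w₁ a ha
  obtain ⟨ε₂, hε₂, hb₂⟩ := Metric.isOpen_iff.1 w₂ b hb
  obtain ⟨u, v, hu, hv, huv⟩ := key (min ε₁ ε₂) (lt_min hε₁ hε₂)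
  refine ⟨Quot.mk relAabAb (u : CircleThree), ?_, ?_⟩
  · exact hb₁ (by simp [Real.dist_eq]; exact hu.trans_le (min_le_left _ _))
  · rw [huv]
    exact hb₂ (by simp [Real.dist_eq]; exact hv.trans_le (min_le_right _ _))

/-- the points `q([0])`, `q([1])`, `q([2])` of `X = C/r` are pairwise
distinct; every open set containing `q([0])` intersects every open set containing
`q([1])`; every open set containing `q([1])` intersects every open set containing
`q([2])`; and in particular `X` is not Hausdorff. -/
theorem stmt_3 :
    Quot.mk relAabAb ((0 : ℝ) : CircleThree) ≠ Quot.mk relAabAb ((1 : ℝ) : CircleThree) ∧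
    Quot.mk relAabAb ((0 : ℝ) : CircleThree) ≠ Quot.mk relAabAb ((2 : ℝ) : CircleThree) ∧
    Quot.mk relAabAb ((1 : ℝ) : CircleThree) ≠ Quot.mk relAabAb ((2 : ℝ) : CircleThree) ∧
    (∀ O₁ O₂ : Set (Quot relAabAb), IsOpen O₁ → IsOpen O₂ →
      Quot.mk relAabAb ((0 : ℝ) : CircleThree) ∈ O₁ →
      Quot.mk relAabAb ((1 : ℝ) : CircleThree) ∈ O₂ → (O₁ ∩ O₂).Nonempty) ∧
    (∀ O₁ O₂ : Set (Quot relAabAb), IsOpen O₁ → IsOpen O₂ →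
      Quot.mk relAabAb ((1 : ℝ) : CircleThree) ∈ O₁ →
      Quot.mk relAabAb ((2 : ℝ) : CircleThree) ∈ O₂ → (O₁ ∩ O₂).Nonempty) ∧
    ¬ T2Space (Quot relAabAb) := by
  have h01 := fSep_quot_ne (x := 0) (y := 1) (by norm_num) (by norm_num) (by norm_num [gSep])
  have h02 := fSep_quot_ne (x := 0) (y := 2) (by norm_num) (by norm_num) (by norm_num [gSep])
  have h12 := fSep_quot_ne (x := 1) (y := 2) (by norm_num) (by norm_num) (by norm_num [gSep])
  have key01 : ∀ ε : ℝ, 0 < ε → ∃ u v : ℝ, |u - 0| < ε ∧ |v - 1| < ε ∧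
      Quot.mk relAabAb (u : CircleThree) = Quot.mk relAabAb (v : CircleThree) := by
    intro ε hε
    set t := min (ε / 2) (1 / 2) with ht
    have ht0 : 0 < t := lt_min (by linarith) (by norm_num)
    have ht1 : t < 1 := (min_le_right _ _).trans_lt (by norm_num)
    have htε : t < ε := (min_le_left _ _).trans_lt (by linarith)
    refine ⟨t, t + 1, by rw [abs_of_pos (by linarith)]; linarith,
      by rw [abs_of_nonneg (by linarith)]; linarith, ?_⟩
    exact Quot.sound (Or.inr ⟨t, ht0, ht1, Or.inl ⟨rfl, rfl⟩⟩)
  have key12 : ∀ ε : ℝ, 0 < ε → ∃ u v : ℝ, |u - 1| < ε ∧ |v - 2| < ε ∧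
      Quot.mk relAabAb (u : CircleThree) = Quot.mk relAabAb (v : CircleThree) := by
    intro ε hε
    set s := min (ε / 2) (1 / 2) with hs
    have hs0 : 0 < s := lt_min (by linarith) (by norm_num)
    have hs1 : s < 1 := (min_le_right _ _).trans_lt (by norm_num)
    have hsε : s < ε := (min_le_left _ _).trans_lt (by linarith)
    refine ⟨1 - s, (1 - s) + 1, by rw [abs_sub_comm, abs_of_pos (by linarith)]; linarith,
      by rw [abs_sub_comm, abs_of_pos (by linarith)]; linarith, ?_⟩
    exact Quot.sound (Or.inr ⟨1 - s, by linarith, by linarith, Or.inl ⟨rfl, rfl⟩⟩)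
  refine ⟨h01, h02, h12, meet 0 1 key01, meet 1 2 key12, ?_⟩
  intro hT2
  obtain ⟨U, V, hU, hV, h0U, h1V, hdisj⟩ := t2_separation h01
  obtain ⟨x, hx⟩ := meet 0 1 key01 U V hU hV h0U h1V
  exact (hdisj.le_bot hx).elim
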